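/- Let a : Fin n → ℝ and let f, g ∈ Rₙ. If a is a corner root of f and a is a corner root of g, then a is a corner root of f + g. -/
import Mathlib


open MvPolynomial

abbrev 𝕋 : Type := Tropical (WithTop ℝ)

/-- The 𝕋-point determined by a real point. -/
noncomputable def tpt {n : ℕ} (a : Fin n → ℝ) : Fin n → 𝕋 :=
  fun i => Tropical.trop (a i : WithTop ℝ)

/-- The value at `a` of the `d`-monomial of `f`. -/
noncomputable def mval {n : ℕ} (f : MvPolynomial (Fin n) 𝕋) (d : Fin n →₀ ℕ)
    (a : Fin n → ℝ) : 𝕋 :=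
  f.coeff d * ∏ i, (tpt a i) ^ d i

/-- `a` is a corner root of `f` if at least two monomials of `f` attain the value of `f`
at `a`. -/
def IsCornerRoot {n : ℕ} (a : Fin n → ℝ) (f : MvPolynomial (Fin n) 𝕋) : Prop :=
  ∃ d₁ ∈ f.support, ∃ d₂ ∈ f.support, d₁ ≠ d₂ ∧
    mval f d₁ a = MvPolynomial.eval (tpt a) f ∧ mval f d₂ a = MvPolynomial.eval (tpt a) f

lemma eval_eq_sum_mval {n : ℕ} (a : Fin n → ℝ) (f : MvPolynomial (Fin n) 𝕋) :
    MvPolynomial.eval (tpt a) f = ∑ d ∈ f.support, mval f d a := by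
  rw [MvPolynomial.eval_eq']; rfl

lemma eval_le_mval {n : ℕ} (a : Fin n → ℝ) (f : MvPolynomial (Fin n) 𝕋) (d : Fin n →₀ ℕ) :
    MvPolynomial.eval (tpt a) f ≤ mval f d a := by
  by_cases hd : d ∈ f.support
  · rw [eval_eq_sum_mval, ← Tropical.untrop_le_iff, Finset.untrop_sum']
    exact Finset.inf_le hd
  · have : mval f d a = 0 := by
      simp [mval, MvPolynomial.notMem_support_iff.mp hd]
    rw [this]
    exact Tropical.le_zero _

lemma mval_add {n : ℕ} (a : Fin n → ℝ) (f g : MvPolynomial (Fin n) 𝕋) (d : Fin n →₀ ℕ) :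
    mval (f + g) d a = mval f d a + mval g d a := by
  simp [mval, MvPolynomial.coeff_add, add_mul]

/-- If `a` is a corner root of both `f` and `g`, then `a` is a corner root of `f + g`. -/
theorem stmt5 {n : ℕ} (a : Fin n → ℝ) (f g : MvPolynomial (Fin n) 𝕋)
    (hf : IsCornerRoot a f) (hg : IsCornerRoot a g) : IsCornerRoot a (f + g) := by
  wlog hle : MvPolynomial.eval (tpt a) f ≤ MvPolynomial.eval (tpt a) g with H
  · rw [add_comm]
    exact H a g f hg hf (le_of_not_ge hle)
  obtain ⟨d₁, hd₁, d₂, hd₂, hne, h1, h2⟩ := hf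
  have hev : MvPolynomial.eval (tpt a) (f + g) = MvPolynomial.eval (tpt a) f := by
    rw [map_add]
    exact Tropical.add_eq_left hle
  have hsupp : ∀ d ∈ f.support, d ∈ (f + g).support := by
    intro d hd
    rw [MvPolynomial.mem_support_iff, MvPolynomial.coeff_add]
    intro h
    exact MvPolynomial.mem_support_iff.mp hd (Tropical.add_eq_zero_iff.mp h).1
  have key : ∀ d ∈ f.support, mval f d a = MvPolynomial.eval (tpt a) f →
      mval (f + g) d a = MvPolynomial.eval (tpt a) (f + g) := by
    intro d _ hm
    rw [hev, mval_add, hm]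
    exact Tropical.add_eq_left (le_trans hle (eval_le_mval a g d))
  exact ⟨d₁, hsupp d₁ hd₁, d₂, hsupp d₂ hd₂, hne, key d₁ hd₁ h1, key d₂ hd₂ h2⟩
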